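/- Let n ≥ 1 be an integer, p > 1, q > 1 with q ≠ 1, D ∈ 𝓜ₙ and u ∈ ℝⁿ. Then the q-Rényi entropy of f_p(D,u,·) equals S_q(f_p(D,u,·)) = (n/2)·log(π(2p−n(1−p))/(p−1)) + (1/(1−q))·log[ Γ(p/(p−1)+n/2)^q · Γ(q/(p−1)+1) / ( Γ(p/(p−1))^q · Γ(q/(p−1)+1+n/2) ) ] − (1/2)·log det D. -/

import Mathlib

open MeasureTheory Matrix

/-- Normalization constant `A_{n,p}` for `p > 1`. -/
noncomputable def gaussA (n : ℕ) (p : ℝ) : ℝ :=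
  ((p - 1) / (2 * p - n * (1 - p))) ^ ((n : ℝ) / 2) *
    Real.Gamma (p / (p - 1) + n / 2) /
    (Real.pi ^ ((n : ℝ) / 2) * Real.Gamma (p / (p - 1)))

/-- The `p`-Gaussian density for `p > 1`. -/
noncomputable def gaussF (n : ℕ) (p : ℝ) (D : Matrix (Fin n) (Fin n) ℝ)
    (u x : Fin n → ℝ) : ℝ :=
  if 0 ≤ 1 - (p - 1) / (2 * p - n * (1 - p)) * ((x - u) ⬝ᵥ D.mulVec (x - u)) then
    gaussA n p * Real.sqrt D.det *
      (1 - (p - 1) / (2 * p - n * (1 - p)) * ((x - u) ⬝ᵥ D.mulVec (x - u))) ^ (1 / (p - 1))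
  else 0

/-- The `q`-Rényi entropy of a density `g` on `ℝⁿ`. -/
noncomputable def renyi (n : ℕ) (q : ℝ) (g : (Fin n → ℝ) → ℝ) : ℝ :=
  1 / (1 - q) * Real.log (∫ x : Fin n → ℝ, g x ^ q)

/-!
`f_p(D,u,·)^q` is a constant times `(1 - a⟨x-u, D(x-u)⟩)₊^{q/(p-1)}`. Substituting
`z = D^{1/2}(x - u)` turns its integral into `(det D)^{-1/2}` times the integral of the radial
function `(1 - a‖z‖²)₊^{q/(p-1)}` over `ℝⁿ`. Polar coordinates followed by `t = a r²` make this a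
Beta integral `B(n/2, q/(p-1) + 1)`, a quotient of Gamma values, and the entropy is the logarithm
of the resulting closed form.
-/

open Real Set

theorem integral_rpow_mul_one_sub_rpow {α β : ℝ} (hα : 0 < α) (hβ : 0 < β) :
    ∫ x in (0:ℝ)..1, x ^ (α - 1) * (1 - x) ^ (β - 1) =
      Gamma α * Gamma β / Gamma (α + β) := by
  have hB := Complex.Gamma_mul_Gamma_eq_betaIntegral (s := α) (t := β) (by simpa) (by simpa)
  have hB_real : Complex.betaIntegral α β =
      ((∫ x in (0:ℝ)..1, x ^ (α - 1) * (1 - x) ^ (β - 1) : ℝ) : ℂ) := by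
    rw [Complex.betaIntegral, ← intervalIntegral.integral_ofReal]
    refine intervalIntegral.integral_congr fun x hx => ?_
    rw [uIcc_of_le zero_le_one] at hx
    push_cast [Complex.ofReal_cpow hx.1, Complex.ofReal_cpow (sub_nonneg.2 hx.2)]
    rfl
  rw [eq_div_iff (Gamma_pos_of_pos (add_pos hα hβ)).ne']
  rw [hB_real, ← Complex.ofReal_add, Complex.Gamma_ofReal, Complex.Gamma_ofReal,
    Complex.Gamma_ofReal] at hB
  exact_mod_cast (mul_comm _ _).trans hB.symm

theorem integral_Ioi_rpow_mul_posPart_one_sub_rpow {c s : ℝ} (hc : 0 < c) (hs : 0 < s) :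
    ∫ t in Ioi (0:ℝ), t ^ (c - 1) * (1 - t)⁺ ^ s =
      Gamma c * Gamma (s + 1) / Gamma (c + (s + 1)) := by
  calc ∫ t in Ioi (0:ℝ), t ^ (c - 1) * (1 - t)⁺ ^ s
      = ∫ t in Ioc (0:ℝ) 1, t ^ (c - 1) * (1 - t)⁺ ^ s := by
        refine setIntegral_eq_of_subset_of_forall_sdiff_eq_zero measurableSet_Ioi
          Ioc_subset_Ioi_self fun t ht => ?_
        have ht1 : 1 < t := lt_of_not_ge fun h => ht.2 ⟨ht.1, h⟩
        rw [posPart_eq_zero.2 (by linarith), zero_rpow hs.ne', mul_zero]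
    _ = ∫ t in (0:ℝ)..1, t ^ (c - 1) * (1 - t) ^ ((s + 1) - 1) := by
        rw [intervalIntegral.integral_of_le zero_le_one]
        refine setIntegral_congr_fun measurableSet_Ioc fun t ht => ?_
        rw [posPart_of_nonneg (sub_nonneg.2 ht.2), add_sub_cancel_right]
    _ = _ := integral_rpow_mul_one_sub_rpow hc (by positivity)

theorem integral_Ioi_rpow_mul_comp_sq (g : ℝ → ℝ) (r : ℝ) :
    ∫ y in Ioi (0:ℝ), y ^ (r - 1) * g (y ^ 2) =
      2⁻¹ * ∫ t in Ioi (0:ℝ), t ^ (r / 2 - 1) * g t := by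
  rw [← integral_comp_rpow_Ioi (fun t => t ^ (r / 2 - 1) * g t) two_ne_zero,
    ← integral_const_mul]
  refine setIntegral_congr_fun measurableSet_Ioi fun y (hy : 0 < y) => ?_
  have hpow : y ^ ((2:ℝ) - 1) * (y ^ (2:ℝ)) ^ (r / 2 - 1) = y ^ (r - 1) := by
    rw [← rpow_mul hy.le, ← rpow_add hy]
    ring_nf
  rw [smul_eq_mul, abs_two, ← hpow, rpow_two]
  ring

theorem integral_Ioi_rpow_mul_comp_mul_left (g : ℝ → ℝ) (c : ℝ) {a : ℝ} (ha : 0 < a) :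
    ∫ t in Ioi (0:ℝ), t ^ (c - 1) * g (a * t) =
      a ^ (-c) * ∫ t in Ioi (0:ℝ), t ^ (c - 1) * g t := by
  have h_scale := integral_comp_mul_left_Ioi (fun t => t ^ (c - 1) * g t) 0 ha
  rw [mul_zero, smul_eq_mul] at h_scale
  calc ∫ t in Ioi (0:ℝ), t ^ (c - 1) * g (a * t)
      = ∫ t in Ioi (0:ℝ), a ^ (-(c - 1)) * ((a * t) ^ (c - 1) * g (a * t)) := by
        refine setIntegral_congr_fun measurableSet_Ioi fun t (ht : 0 < t) => ?_
        rw [mul_rpow ha.le ht.le, rpow_neg ha.le]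
        field_simp [(rpow_pos_of_pos ha (c - 1)).ne']
    _ = a ^ (-c) * ∫ t in Ioi (0:ℝ), t ^ (c - 1) * g t := by
        rw [integral_const_mul, h_scale, ← mul_assoc, ← rpow_neg_one, ← rpow_add ha]
        ring_nf

theorem integral_Ioi_rpow_mul_posPart_one_sub_mul_sq_rpow {r a s : ℝ} (hr : 0 < r) (ha : 0 < a)
    (hs : 0 < s) :
    ∫ y in Ioi (0:ℝ), y ^ (r - 1) * (1 - a * y ^ 2)⁺ ^ s =
      a ^ (-(r / 2)) * (Gamma (r / 2) * Gamma (s + 1) / Gamma (r / 2 + (s + 1))) / 2 := by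
  rw [integral_Ioi_rpow_mul_comp_sq (fun t => (1 - a * t)⁺ ^ s),
    integral_Ioi_rpow_mul_comp_mul_left (fun t => (1 - t)⁺ ^ s) _ ha,
    integral_Ioi_rpow_mul_posPart_one_sub_rpow (by positivity) hs]
  ring

theorem integral_posPart_one_sub_mul_norm_sq_rpow {E : Type*} [NormedAddCommGroup E]
    [InnerProductSpace ℝ E] [FiniteDimensional ℝ E] [MeasurableSpace E] [BorelSpace E]
    [Nontrivial E] {a s : ℝ} (ha : 0 < a) (hs : 0 < s) :
    ∫ x : E, (1 - a * ‖x‖ ^ 2)⁺ ^ s =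
      π ^ ((Module.finrank ℝ E : ℝ) / 2) * a ^ (-((Module.finrank ℝ E : ℝ) / 2)) *
        (Gamma (s + 1) / Gamma (s + 1 + Module.finrank ℝ E / 2)) := by
  set d := Module.finrank ℝ E
  have hd : 0 < d := Module.finrank_pos
  have h_radial : ∫ y in Ioi (0:ℝ), y ^ (d - 1) • (1 - a * y ^ 2)⁺ ^ s =
      ∫ y in Ioi (0:ℝ), y ^ ((d:ℝ) - 1) * (1 - a * y ^ 2)⁺ ^ s := by
    refine setIntegral_congr_fun measurableSet_Ioi fun y _ => ?_
    rw [smul_eq_mul, ← rpow_natCast, Nat.cast_sub hd, Nat.cast_one]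
  have h_ball : volume.real (Metric.ball (0 : E) 1) = √π ^ d / Gamma (d / 2 + 1) := by
    rw [measureReal_def, InnerProductSpace.volume_ball, ENNReal.ofReal_one, one_pow, one_mul,
      ENNReal.toReal_ofReal (by positivity)]
  have hΓ := (Gamma_pos_of_pos (by positivity : (0:ℝ) < d / 2)).ne'
  rw [integral_fun_norm_addHaar volume fun y => (1 - a * y ^ 2)⁺ ^ s, h_radial, h_ball,
    integral_Ioi_rpow_mul_posPart_one_sub_mul_sq_rpow (by positivity) ha hs, nsmul_eq_mul,
    smul_eq_mul, Gamma_add_one (by positivity), sqrt_eq_rpow, ← rpow_mul_natCast pi_pos.le,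
    add_comm (s + 1)]
  field_simp
  rfl

theorem integral_comp_dotProduct_self {ι F : Type*} [Fintype ι] [NormedAddCommGroup F]
    [NormedSpace ℝ F] (f : ℝ → F) :
    ∫ z : ι → ℝ, f (z ⬝ᵥ z) = ∫ w : EuclideanSpace ℝ ι, f (‖w‖ ^ 2) := by
  rw [← (EuclideanSpace.volume_preserving_symm_measurableEquiv_toLp ι).integral_comp']
  congr! 2 with w
  rw [EuclideanSpace.real_norm_sq_eq]
  simp [dotProduct, sq]

theorem integral_posPart_one_sub_mul_dotProduct_self_rpow {ι : Type*} [Fintype ι] {a s : ℝ}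
    (ha : 0 < a) (hs : 0 < s) :
    ∫ z : ι → ℝ, (1 - a * (z ⬝ᵥ z))⁺ ^ s =
      π ^ ((Fintype.card ι : ℝ) / 2) * a ^ (-((Fintype.card ι : ℝ) / 2)) *
        (Gamma (s + 1) / Gamma (s + 1 + Fintype.card ι / 2)) := by
  cases isEmpty_or_nonempty ι
  · rw [Measure.volume_pi_eq_dirac]
    simp [dotProduct, (Gamma_pos_of_pos (by linarith : 0 < s + 1)).ne']
  · rw [integral_comp_dotProduct_self fun t => (1 - a * t)⁺ ^ s,
      integral_posPart_one_sub_mul_norm_sq_rpow ha hs, finrank_euclideanSpace]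

theorem integral_comp_mulVec {ι F : Type*} [Fintype ι] [DecidableEq ι] [NormedAddCommGroup F]
    [NormedSpace ℝ F] {M : Matrix ι ι ℝ} (hM : M.det ≠ 0) (g : (ι → ℝ) → F) :
    ∫ x, g (M *ᵥ x) = |M.det|⁻¹ • ∫ y, g y := by
  have hdet : LinearMap.det (toLin' M) ≠ 0 := by rwa [LinearMap.det_toLin']
  have hM_emb : MeasurableEmbedding (toLin' M) :=
    ((toLin' M).equivOfDetNeZero hdet).toContinuousLinearEquiv.toHomeomorph.measurableEmbedding
  calc ∫ x, g (M *ᵥ x) = ∫ y, g y ∂(Measure.map (toLin' M) volume) :=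
        (hM_emb.integral_map g).symm
    _ = |M.det|⁻¹ • ∫ y, g y := by
        rw [map_matrix_volume_pi_eq_smul_volume_pi hM, integral_smul_measure,
          ENNReal.toReal_ofReal (abs_nonneg _), abs_inv]

open scoped MatrixOrder in
theorem integral_comp_dotProduct_mulVec_sub {ι F : Type*} [Fintype ι] [DecidableEq ι]
    [NormedAddCommGroup F] [NormedSpace ℝ F] {D : Matrix ι ι ℝ} (hD : D.PosDef) (u : ι → ℝ)
    (f : ℝ → F) :
    ∫ x, f ((x - u) ⬝ᵥ D *ᵥ (x - u)) = (√D.det)⁻¹ • ∫ z : ι → ℝ, f (z ⬝ᵥ z) := by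
  set S := CFC.sqrt D
  have hSS : S * S = D := CFC.sqrt_mul_sqrt_self D hD.posSemidef.nonneg
  have hST : Sᵀ = S := (CFC.sqrt_nonneg D).posSemidef.isHermitian
  have hdet : |S.det| = √D.det := by rw [← hSS, det_mul, sqrt_mul_self_eq_abs]
  have hquad (x : ι → ℝ) : x ⬝ᵥ D *ᵥ x = S *ᵥ x ⬝ᵥ S *ᵥ x := by
    rw [← hSS, ← mulVec_mulVec, dotProduct_mulVec, ← mulVec_transpose, hST]
  have hS : S.det ≠ 0 := abs_pos.1 (hdet ▸ sqrt_pos.2 hD.det_pos)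
  rw [integral_sub_right_eq_self (fun x => f (x ⬝ᵥ D *ᵥ x)) u]
  simp_rw [hquad]
  rw [integral_comp_mulVec hS fun z => f (z ⬝ᵥ z), hdet]

/-- The constant `a` in `f_p`. -/
noncomputable def gaussScale (n : ℕ) (p : ℝ) : ℝ := (p - 1) / (2 * p - n * (1 - p))

theorem gaussScale_pos {n : ℕ} {p : ℝ} (hp : 1 < p) : 0 < gaussScale n p :=
  div_pos (by linarith) (by nlinarith)

theorem gaussA_pos {n : ℕ} {p : ℝ} (hp : 1 < p) : 0 < gaussA n p := by
  have ha := gaussScale_pos (n := n) hp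
  have hG₁ := Gamma_pos_of_pos (by positivity : 0 < p / (p - 1) + n / 2)
  have hG₂ := Gamma_pos_of_pos (div_pos (by linarith) (by linarith) : 0 < p / (p - 1))
  unfold gaussA
  unfold gaussScale at ha
  positivity

theorem gaussF_rpow {n : ℕ} {p q : ℝ} (hp : 1 < p) (hq : 0 < q) (D : Matrix (Fin n) (Fin n) ℝ)
    (u x : Fin n → ℝ) :
    gaussF n p D u x ^ q = (gaussA n p * √D.det) ^ q *
      (1 - gaussScale n p * ((x - u) ⬝ᵥ D *ᵥ (x - u)))⁺ ^ (q / (p - 1)) := by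
  unfold gaussF gaussScale
  split_ifs with h
  · have hA := gaussA_pos (n := n) hp
    rw [posPart_of_nonneg h, mul_rpow (by positivity) (rpow_nonneg h _), ← rpow_mul h,
      one_div_mul_eq_div]
  · rw [posPart_eq_zero.2 (not_le.1 h).le, zero_rpow hq.ne',
      zero_rpow (div_pos hq (sub_pos.2 hp)).ne', mul_zero]

theorem integral_gaussF_rpow {n : ℕ} {p q : ℝ} (hp : 1 < p) (hq : 0 < q)
    {D : Matrix (Fin n) (Fin n) ℝ} (hD : D.PosDef) (u : Fin n → ℝ) :
    ∫ x, gaussF n p D u x ^ q = (gaussA n p * √D.det) ^ q * ((√D.det)⁻¹ *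
      (π ^ ((n : ℝ) / 2) * gaussScale n p ^ (-((n : ℝ) / 2)) *
        (Gamma (q / (p - 1) + 1) / Gamma (q / (p - 1) + 1 + n / 2)))) := by
  simp_rw [gaussF_rpow hp hq D u]
  rw [integral_const_mul, integral_comp_dotProduct_mulVec_sub hD u
      fun t => (1 - gaussScale n p * t)⁺ ^ (q / (p - 1)), smul_eq_mul,
    integral_posPart_one_sub_mul_dotProduct_self_rpow (gaussScale_pos hp)
      (div_pos hq (sub_pos.2 hp)), Fintype.card_fin]

theorem log_gaussA {n : ℕ} {p : ℝ} (hp : 1 < p) :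
    log (gaussA n p) = n / 2 * (log (gaussScale n p) - log π) +
      log (Gamma (p / (p - 1) + n / 2)) - log (Gamma (p / (p - 1))) := by
  have ha := gaussScale_pos (n := n) hp
  have hG₁ := Gamma_pos_of_pos (by positivity : 0 < p / (p - 1) + n / 2)
  have hG₂ := Gamma_pos_of_pos (div_pos (by linarith) (by linarith) : 0 < p / (p - 1))
  have hπ := rpow_pos_of_pos pi_pos ((n : ℝ) / 2)
  rw [gaussA, ← gaussScale, log_div (by positivity) (by positivity),
    log_mul (by positivity) hG₁.ne', log_mul hπ.ne' hG₂.ne', log_rpow ha, log_rpow pi_pos]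
  ring

theorem log_integral_gaussF_rpow {n : ℕ} {p q : ℝ} (hp : 1 < p) (hq : 0 < q)
    {D : Matrix (Fin n) (Fin n) ℝ} (hD : D.PosDef) (u : Fin n → ℝ) :
    log (∫ x, gaussF n p D u x ^ q) =
      (1 - q) * (n / 2) * (log π - log (gaussScale n p)) +
        (q * log (Gamma (p / (p - 1) + n / 2)) + log (Gamma (q / (p - 1) + 1)) -
          (q * log (Gamma (p / (p - 1))) + log (Gamma (q / (p - 1) + 1 + n / 2)))) +
        (q - 1) / 2 * log D.det := by
  have ha := gaussScale_pos (n := n) hp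
  have hA := gaussA_pos (n := n) hp
  have hdet := hD.det_pos
  have hG₃ := Gamma_pos_of_pos (by positivity : 0 < q / (p - 1) + 1)
  have hG₄ := Gamma_pos_of_pos (by positivity : 0 < q / (p - 1) + 1 + n / 2)
  have hπ := rpow_pos_of_pos pi_pos ((n : ℝ) / 2)
  rw [integral_gaussF_rpow hp hq hD u, log_mul (by positivity) (by positivity),
    log_rpow (by positivity), log_mul hA.ne' (by positivity),
    log_mul (by positivity) (by positivity), log_inv, log_sqrt hdet.le,
    log_mul (by positivity) (by positivity), log_mul hπ.ne' (by positivity), log_rpow pi_pos,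
    log_rpow ha, log_div hG₃.ne' hG₄.ne', log_gaussA hp]
  ring

theorem renyi_gaussF_general (n : ℕ) (p q : ℝ) (hp : 1 < p) (hq : 1 < q)
    (D : Matrix (Fin n) (Fin n) ℝ) (hD : D.PosDef) (u : Fin n → ℝ) :
    renyi n q (gaussF n p D u) =
      (n / 2) * Real.log (Real.pi * (2 * p - n * (1 - p)) / (p - 1)) +
        1 / (1 - q) * Real.log
          (Real.Gamma (p / (p - 1) + n / 2) ^ q * Real.Gamma (q / (p - 1) + 1) /
            (Real.Gamma (p / (p - 1)) ^ q * Real.Gamma (q / (p - 1) + 1 + n / 2))) -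
        (1 / 2) * Real.log D.det := by
  have hG₁ := Gamma_pos_of_pos (by positivity : 0 < p / (p - 1) + n / 2)
  have hG₂ := Gamma_pos_of_pos (div_pos (by linarith) (by linarith) : 0 < p / (p - 1))
  have hG₃ := Gamma_pos_of_pos (by positivity : 0 < q / (p - 1) + 1)
  have hG₄ := Gamma_pos_of_pos (by positivity : 0 < q / (p - 1) + 1 + n / 2)
  have hlog_scale : log (π * (2 * p - n * (1 - p)) / (p - 1)) = log π - log (gaussScale n p) := by
    rw [← log_div pi_ne_zero (gaussScale_pos hp).ne', gaussScale, div_div_eq_mul_div]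
  have hlog_Gamma : log (Gamma (p / (p - 1) + n / 2) ^ q * Gamma (q / (p - 1) + 1) /
      (Gamma (p / (p - 1)) ^ q * Gamma (q / (p - 1) + 1 + n / 2))) =
      q * log (Gamma (p / (p - 1) + n / 2)) + log (Gamma (q / (p - 1) + 1)) -
        (q * log (Gamma (p / (p - 1))) + log (Gamma (q / (p - 1) + 1 + n / 2))) := by
    rw [log_div (by positivity) (by positivity), log_mul (by positivity) hG₃.ne',
      log_mul (by positivity) hG₄.ne', log_rpow hG₁, log_rpow hG₂]
  have hq₁ : (1 : ℝ) - q ≠ 0 := by linarith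
  rw [renyi, log_integral_gaussF_rpow hp (by linarith) hD u, hlog_scale, hlog_Gamma]
  field_simp
  ring

/-- `q`-Rényi entropy of the `p`-Gaussian for `p > 1`, `q > 1`. -/
theorem renyi_gaussF (n : ℕ) (hn : 1 ≤ n) (p q : ℝ) (hp : 1 < p) (hq : 1 < q) (hq1 : q ≠ 1)
    (D : Matrix (Fin n) (Fin n) ℝ) (hD : D.PosDef) (u : Fin n → ℝ) :
    renyi n q (gaussF n p D u) =
      (n / 2) * Real.log (Real.pi * (2 * p - n * (1 - p)) / (p - 1)) +
        1 / (1 - q) * Real.log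
          (Real.Gamma (p / (p - 1) + n / 2) ^ q * Real.Gamma (q / (p - 1) + 1) /
            (Real.Gamma (p / (p - 1)) ^ q * Real.Gamma (q / (p - 1) + 1 + n / 2))) -
        (1 / 2) * Real.log D.det :=
  renyi_gaussF_general n p q hp hq D hD u
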